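/- Let m ≥ 2 and n be positive integers, let π ∈ S_n have order exactly m, and let σ ∈ S_n and s ∈ ℤ_m. Then, in the complex vector space with standard basis {e_r ⊗ e_τ : r ∈ ℤ_m, τ ∈ S_n}, the identity (1/m^{3/2}) Σ_{r,r′,t ∈ ℤ_m} ω_m^{st + rr′} e_{r′} ⊗ e_{σπ^{r+t mod m}} = e_s ⊗ Φ_{π,s}^σ holds. (This character-sum identity is the core computation of the Generalized Controlled-π Test: measuring the first register yields the message s with certainty.) -/

import Mathlib

open Finset

/-- The vector `Φ_{π,s}^σ = (1/√m) Σ_{t=0}^{m−1} ω_m^{st} e_{σπ^t}` in `ℂ^{S_n}`,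
where `ω_m = e^{2πi/m}`. -/
noncomputable def PhiVec (n m : ℕ) (π σ : Equiv.Perm (Fin n)) (s : ZMod m) :
    Equiv.Perm (Fin n) → ℂ :=
  fun τ => (1 / (Real.sqrt m : ℂ)) *
    ∑ t ∈ Finset.range m,
      Complex.exp (2 * Real.pi * Complex.I / m) ^ (s.val * t) *
        (if τ = σ * π ^ t then 1 else 0)

/-!
Read the exponents in `ZMod m`, so that `ω_m ^ k = ψ k` for the standard additive character `ψ`
of `ZMod m`. Substituting `w = r + t`, the sum over `r` becomes `Σ_r ψ (r (r' - s))`, which by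
orthogonality of characters is `m` when `r' = s` and `0` otherwise.
-/

lemma exp_two_pi_I_div_pow_eq_stdAddChar (m : ℕ) [NeZero m] (k : ℕ) :
    Complex.exp (2 * Real.pi * Complex.I / m) ^ k = ZMod.stdAddChar (k : ZMod m) := by
  rw [ZMod.stdAddChar_apply, ZMod.toCircle_natCast, ← Complex.exp_nat_mul]
  ring_nf

lemma Finset.sum_range_eq_sum_zmod_val {M : Type*} [AddCommMonoid M] (m : ℕ) [NeZero m]
    (f : ℕ → M) : ∑ i ∈ range m, f i = ∑ x : ZMod m, f x.val := by
  obtain ⟨k, rfl⟩ := Nat.exists_eq_succ_of_ne_zero (NeZero.ne m)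
  exact (Fin.sum_univ_eq_sum_range f _).symm

lemma AddChar.sum_controlled_shift_eq {R G : Type*} [CommRing R] [Fintype R]
    [DecidableEq R] [DecidableEq G] {ψ : AddChar R ℂ} (hψ : ψ.IsPrimitive) (g : R → G)
    (s a : R) (τ : G) :
    ∑ x, ∑ y, ∑ z, ψ (s * z + x * y) * (if (a, τ) = (y, g (x + z)) then 1 else 0) =
      (if a = s then (Fintype.card R : ℂ) else 0) *
        ∑ w, ψ (s * w) * (if τ = g w then 1 else 0) := by
  have hshift : ∀ x, ∑ z, ψ (s * z + x * a) * (if τ = g (x + z) then 1 else 0) =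
      ψ (x * (a - s)) * ∑ w, ψ (s * w) * (if τ = g w then 1 else 0) := by
    intro x
    rw [mul_sum]
    refine Fintype.sum_equiv (Equiv.addLeft x) _ _ fun z => ?_
    rw [Equiv.coe_addLeft, ← mul_assoc, ← AddChar.map_add_eq_mul]
    congr 2
    ring
  calc ∑ x, ∑ y, ∑ z, ψ (s * z + x * y) * (if (a, τ) = (y, g (x + z)) then 1 else 0)
      = ∑ x, ∑ z, ψ (s * z + x * a) * (if τ = g (x + z) then 1 else 0) := by
        refine sum_congr rfl fun x _ => ?_
        simp only [Prod.mk.injEq, ite_and, mul_ite, mul_one, mul_zero]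
        rw [sum_comm]
        simp
    _ = (∑ x, ψ (x * (a - s))) * ∑ w, ψ (s * w) * (if τ = g w then 1 else 0) := by
        rw [sum_mul]; exact sum_congr rfl fun x _ => hshift x
    _ = _ := by simp only [AddChar.sum_mulShift _ hψ, sub_eq_zero, Nat.cast_ite, Nat.cast_zero]

theorem generalized_controlled_perm_test_general (n m : ℕ)
    (π : Equiv.Perm (Fin n)) (σ : Equiv.Perm (Fin n))
    (s : ZMod m) :
    (fun p : ZMod m × Equiv.Perm (Fin n) =>
        (1 / ((m : ℂ) * (Real.sqrt m : ℂ))) *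
          ∑ r ∈ Finset.range m, ∑ r' ∈ Finset.range m, ∑ t ∈ Finset.range m,
            Complex.exp (2 * Real.pi * Complex.I / m) ^ (s.val * t + r * r') *
              (if p = ((r' : ZMod m), σ * π ^ ((r + t) % m)) then 1 else 0)) =
      fun p : ZMod m × Equiv.Perm (Fin n) =>
        (if p.1 = s then 1 else 0) * PhiVec n m π σ s p.2 := by
  rcases eq_or_ne m 0 with rfl | hm
  · simp [PhiVec]
  have : NeZero m := ⟨hm⟩
  funext ⟨a, τ⟩
  simp only [PhiVec, sum_range_eq_sum_zmod_val m, exp_two_pi_I_div_pow_eq_stdAddChar m,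
    ← ZMod.val_add, ZMod.natCast_zmod_val, Nat.cast_add, Nat.cast_mul]
  rw [AddChar.sum_controlled_shift_eq (ZMod.isPrimitive_stdAddChar m)
    (fun w => σ * π ^ w.val), ZMod.card]
  have hmC : (m : ℂ) ≠ 0 := Nat.cast_ne_zero.mpr hm
  split_ifs
  · field_simp
  · simp

/-- The core character-sum identity of the Generalized Controlled-`π` Test: in
`ℂ^{ℤ_m × S_n}`,
`(1/m^{3/2}) Σ_{r,r′,t ∈ ℤ_m} ω_m^{st+rr′} e_{r′} ⊗ e_{σπ^{r+t mod m}} = e_s ⊗ Φ_{π,s}^σ`,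
so measuring the first register yields `s` with certainty. -/
theorem generalized_controlled_perm_test (n m : ℕ) (hn : 0 < n) (hm : 2 ≤ m)
    (π : Equiv.Perm (Fin n)) (hπ : orderOf π = m) (σ : Equiv.Perm (Fin n))
    (s : ZMod m) :
    (fun p : ZMod m × Equiv.Perm (Fin n) =>
        (1 / ((m : ℂ) * (Real.sqrt m : ℂ))) *
          ∑ r ∈ Finset.range m, ∑ r' ∈ Finset.range m, ∑ t ∈ Finset.range m,
            Complex.exp (2 * Real.pi * Complex.I / m) ^ (s.val * t + r * r') *
              (if p = ((r' : ZMod m), σ * π ^ ((r + t) % m)) then 1 else 0)) =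
      fun p : ZMod m × Equiv.Perm (Fin n) =>
        (if p.1 = s then 1 else 0) * PhiVec n m π σ s p.2 :=
  generalized_controlled_perm_test_general n m π σ s
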